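/- arXiv:1604.02074 — 2 statements merged into one kernel-verified Lean document; each statement's English description precedes it below -/
import Mathlib

section
/- Let k ≥ 1 and let L : J^k → ℝ be a smooth Lagrangian, with momentum functions L^r_α and Euler–Lagrange functions L^0_α. Fix a smooth map F : J^(2k−1) → ℝ^n, and for each point p = (t, q_0, …, q_(2k−1)) ∈ J^(2k−1) define the tangent vector X(p) := (1, q_1, …, q_(2k−1), F(p)) ∈ ℝ × (ℝ^n)^(2k) (a holonomic vector field). Then for every p, i(X(p)) dΘ_L(p) = − Σ_{α=1}^{n} L^0_α(t, q_0, …, q_(2k−1), F(p)) · (dq_0^α − q_1^α dt). In particular, i(X(p)) dΘ_L(p) = 0 if and only if L^0_α(t, q_0, …, q_(2k−1), F(p)) = 0 for every α = 1, …, n. -/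
noncomputable section

/-- The `j`-th order jet space `J^j = ℝ × (ℝ^n)^(j+1)` of curves in `ℝ^n`,
with coordinates `(t, q_0, …, q_j)`. -/
abbrev Jet (n j : ℕ) : Type := ℝ × (Fin (j + 1) → Fin n → ℝ)

namespace Jet

variable {n : ℕ}

/-- The projection (truncation) `J^j → J^s` forgetting the coordinates `q_i` for `i > s`
(padding with `0` in the irrelevant case `s > j`). -/
def projTo {j : ℕ} (s : ℕ) (p : Jet n j) : Jet n s :=
  (p.1, fun i α => if h : (i : ℕ) < j + 1 then p.2 ⟨i, h⟩ α else 0)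

/-- The coordinate function `q_i^α` (zero if out of range). -/
def coordq {j : ℕ} (i : ℕ) (α : Fin n) (p : Jet n j) : ℝ :=
  if h : i < j + 1 then p.2 ⟨i, h⟩ α else 0

/-- The tangent vector in the `t`-direction. -/
def vt {j : ℕ} : Jet n j := (1, 0)

/-- The tangent vector in the `q_i^α`-direction (zero vector if `i` is out of range). -/
def vq {j : ℕ} (i : ℕ) (α : Fin n) : Jet n j :=
  (0, fun i' α' => if (i' : ℕ) = i ∧ α' = α then 1 else 0)

/-- The partial derivative `∂f/∂t`. -/
def pdt {j : ℕ} (f : Jet n j → ℝ) (p : Jet n j) : ℝ := fderiv ℝ f p vt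

/-- The partial derivative `∂f/∂q_i^α`. -/
def pdq {j : ℕ} (i : ℕ) (α : Fin n) (f : Jet n j → ℝ) (p : Jet n j) : ℝ :=
  fderiv ℝ f p (vq i α)

/-- The total time derivative `D_t f : J^(j+1) → ℝ` of a function `f : J^j → ℝ`:
`D_t f = ∂f/∂t + Σ_{i=0}^{j} Σ_α q_(i+1)^α ∂f/∂q_i^α`. -/
def Dt {j : ℕ} (f : Jet n j → ℝ) (p : Jet n (j + 1)) : ℝ :=
  pdt f (projTo j p) +
    ∑ i : Fin (j + 1), ∑ α : Fin n, p.2 i.succ α * pdq (i : ℕ) α f (projTo j p)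

/-- The iterated total time derivative `D_t^i : C^∞(J^j) → C^∞(J^(j+i))`. -/
def DtIter {j : ℕ} : (i : ℕ) → (Jet n j → ℝ) → Jet n (j + i) → ℝ
  | 0, f => f
  | i + 1, f => Dt (DtIter i f)

/-- `f : J^j → ℝ` is `π^j_s`-basic: it factors through the projection `J^j → J^s`. -/
def Basic {j : ℕ} (s : ℕ) (f : Jet n j → ℝ) : Prop :=
  ∃ g : Jet n s → ℝ, ∀ p, f p = g (projTo s p)

/-- The momentum function `L^r_α := Σ_{i=0}^{k−r} (−1)^i D_t^i(∂L/∂q_(r+i)^α)`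
of a `k`-th order Lagrangian, regarded as a function on `J^(2k−1)`. -/
def mom (k : ℕ) (L : Jet n k → ℝ) (r : ℕ) (α : Fin n) (p : Jet n (2 * k - 1)) : ℝ :=
  ∑ i ∈ Finset.range (k - r + 1),
    (-1 : ℝ) ^ i * DtIter i (pdq (r + i) α L) (projTo (k + i) p)

/-- The Euler–Lagrange function `L^0_α := ∂L/∂q_0^α − D_t L^1_α : J^(2k) → ℝ`. -/
def EL (k : ℕ) (L : Jet n k → ℝ) (α : Fin n) (p : Jet n (2 * k)) : ℝ :=
  pdq 0 α L (projTo k p) - Dt (mom k L 1 α) (projTo (2 * k - 1 + 1) p)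

/-- The coordinate covector `dt` on `J^j`. -/
def dt (j : ℕ) : Jet n j →L[ℝ] ℝ := ContinuousLinearMap.fst ℝ ℝ (Fin (j + 1) → Fin n → ℝ)

/-- The coordinate covector `dq_i^α` on `J^j` (zero if out of range). -/
def dq (j : ℕ) (i : ℕ) (α : Fin n) : Jet n j →L[ℝ] ℝ :=
  if h : i < j + 1 then
    (ContinuousLinearMap.proj α : (Fin n → ℝ) →L[ℝ] ℝ).comp
      (((ContinuousLinearMap.proj (⟨i, h⟩ : Fin (j + 1)) :
          (Fin (j + 1) → Fin n → ℝ) →L[ℝ] (Fin n → ℝ))).comp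
        (ContinuousLinearMap.snd ℝ ℝ (Fin (j + 1) → Fin n → ℝ)))
  else 0

/-- The Poincaré–Cartan 1-form
`Θ_L = Σ_{r=1}^k Σ_α L^r_α dq_(r−1)^α + (L − Σ_{r=1}^k Σ_α L^r_α q_r^α) dt`
of a `k`-th order Lagrangian, as a covector-valued map on `J^(2k−1)`. -/
def PC (k : ℕ) (L : Jet n k → ℝ) (p : Jet n (2 * k - 1)) : Jet n (2 * k - 1) →L[ℝ] ℝ :=
  (∑ r ∈ Finset.Icc 1 k, ∑ α : Fin n, mom k L r α p • dq (2 * k - 1) (r - 1) α) +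
    (L (projTo k p) -
        ∑ r ∈ Finset.Icc 1 k, ∑ α : Fin n, mom k L r α p * coordq r α p) • dt (2 * k - 1)

/-- `dΘ_L(p)(u,v) := (DΘ_L(p)u)(v) − (DΘ_L(p)v)(u)`, where `D` is the Fréchet derivative. -/
def dPC (k : ℕ) (L : Jet n k → ℝ) (p u v : Jet n (2 * k - 1)) : ℝ :=
  fderiv ℝ (PC k L) p u v - fderiv ℝ (PC k L) p v u

/-- The `j`-th prolongation `j^j c : ℝ → J^j` of a curve `c : ℝ → ℝ^n`. -/
def prol (j : ℕ) (c : ℝ → Fin n → ℝ) (t : ℝ) : Jet n j :=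
  (t, fun i α => iteratedDeriv (i : ℕ) c t α)

end Jet

namespace Jet

/-- The holonomic vector field `X(p) := (1, q_1, …, q_(2k−1), F(p))` determined by
`F : J^(2k−1) → ℝ^n`. -/
def hvf {n k : ℕ} (F : Jet n (2 * k - 1) → Fin n → ℝ) (p : Jet n (2 * k - 1)) :
    Jet n (2 * k - 1) :=
  (1, fun i α => if h : (i : ℕ) + 1 < 2 * k - 1 + 1 then p.2 ⟨(i : ℕ) + 1, h⟩ α else F p α)

/-- The point `(t, q_0, …, q_(2k−1), F(p)) ∈ J^(2k)` over `p ∈ J^(2k−1)`. -/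
def extendBy {n k : ℕ} (F : Jet n (2 * k - 1) → Fin n → ℝ) (p : Jet n (2 * k - 1)) :
    Jet n (2 * k) :=
  (p.1, fun i α => if h : (i : ℕ) < 2 * k - 1 + 1 then p.2 ⟨(i : ℕ), h⟩ α else F p α)

end Jet

namespace Jet
variable {n : ℕ}

/-- `projTo` as a continuous linear map. -/
def projL (j s : ℕ) : Jet n j →L[ℝ] Jet n s :=
  (ContinuousLinearMap.fst ℝ ℝ _).prod
    (ContinuousLinearMap.pi fun i : Fin (s + 1) =>
      if h : (i : ℕ) < j + 1 then
        (ContinuousLinearMap.proj (⟨i, h⟩ : Fin (j + 1))).comp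
          (ContinuousLinearMap.snd ℝ ℝ _)
      else 0)

lemma projL_apply {j : ℕ} (s : ℕ) (p : Jet n j) : projL j s p = projTo s p := by
  unfold projL projTo
  refine Prod.ext rfl ?_
  funext i α
  by_cases h : (i : ℕ) ≤ j <;> simp [h]

lemma vec_decomp {j : ℕ} (v : Jet n j) :
    v = v.1 • (vt : Jet n j) + ∑ i : Fin (j + 1), ∑ α : Fin n, v.2 i α • vq (i : ℕ) α := by
  refine Prod.ext ?_ ?_
  · simp [vt, vq, Prod.fst_sum]
  · funext i' α'
    have h2 : (∑ i : Fin (j + 1), ∑ α : Fin n, v.2 i α • (vq (i : ℕ) α : Jet n j)).2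
        = ∑ i : Fin (j + 1), ∑ α : Fin n, (v.2 i α • (vq (i : ℕ) α : Jet n j)).2 := by
      simp [Prod.snd_sum]
    simp only [Prod.snd_add, h2, Prod.smul_snd, Pi.add_apply, Pi.smul_apply,
      Finset.sum_apply, vt, vq, smul_zero, Pi.zero_apply, zero_add, smul_eq_mul,
      mul_ite, mul_one, mul_zero, Fin.val_eq_val]
    rw [Finset.sum_comm]
    simp [Prod.snd_sum, Finset.sum_apply, ite_and, Finset.sum_ite_eq]

lemma fderiv_expand {j : ℕ} (f : Jet n j → ℝ) (p v : Jet n j) :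
    fderiv ℝ f p v =
      v.1 * pdt f p + ∑ i : Fin (j + 1), ∑ α : Fin n, v.2 i α * pdq (i : ℕ) α f p := by
  conv_lhs => rw [vec_decomp v]
  rw [map_add, map_smul, map_sum]
  simp only [map_sum, map_smul, smul_eq_mul]
  rfl

end Jet
namespace Jet
variable {n : ℕ}

lemma projTo_self {j : ℕ} (p : Jet n j) : projTo j p = p := by
  refine Prod.ext rfl ?_
  funext i α
  simp [projTo, i.isLt, i.is_le]

lemma projTo_projTo {j s s' : ℕ} (h : s ≤ s') (p : Jet n j) :
    projTo s (projTo s' p) = projTo s p := by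
  refine Prod.ext rfl ?_
  funext i α
  have hi : (i : ℕ) < s' + 1 := lt_of_lt_of_le i.isLt (by omega)
  by_cases hj : (i : ℕ) ≤ j <;> simp [projTo, hi, hj, (show (i : ℕ) ≤ s' by omega)]

lemma coordq_projTo {j s : ℕ} {i : ℕ} (h : i ≤ s) (α : Fin n) (p : Jet n j) :
    coordq i α (projTo s p) = coordq i α p := by
  have hi : i < s + 1 := by omega
  by_cases hj : i ≤ j <;> simp [coordq, projTo, hi, hj, (show i ≤ s by omega)]

lemma snd_eq_coordq {j : ℕ} (p : Jet n j) (i : Fin (j + 1)) (α : Fin n) :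
    p.2 i α = coordq (i : ℕ) α p := by
  simp [coordq, i.isLt]

lemma dq_apply {j : ℕ} (i : ℕ) (α : Fin n) (q : Jet n j) :
    dq j i α q = coordq i α q := by
  by_cases h : i < j + 1 <;> simp [dq, coordq, h]

lemma vq_zero {j : ℕ} {i : ℕ} (h : j + 1 ≤ i) (α : Fin n) : (vq i α : Jet n j) = 0 := by
  refine Prod.ext rfl ?_
  funext i' α'
  have : ¬((i' : ℕ) = i ∧ α' = α) := by
    rintro ⟨h1, -⟩; have := i'.isLt; omega
  simp [vq, this]

lemma pdq_zero {j : ℕ} {i : ℕ} (h : j + 1 ≤ i) (α : Fin n) (f : Jet n j → ℝ) (q : Jet n j) :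
    pdq i α f q = 0 := by
  rw [pdq, vq_zero h, map_zero]

lemma projTo_vt {j s : ℕ} : projTo s (vt : Jet n j) = (vt : Jet n s) := by
  refine Prod.ext rfl ?_
  funext i α
  by_cases h : (i : ℕ) < j + 1 <;> simp [projTo, vt, h]

lemma projTo_vq {j s : ℕ} (h : s ≤ j) (i : ℕ) (α : Fin n) :
    projTo s (vq i α : Jet n j) = (vq i α : Jet n s) := by
  refine Prod.ext rfl ?_
  funext i' α'
  have hi : (i' : ℕ) < j + 1 := lt_of_lt_of_le i'.isLt (by omega)
  simp [projTo, vq, hi, (show (i' : ℕ) ≤ j by omega)]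

lemma fderiv_comp_projL {j s : ℕ} (g : Jet n s → ℝ) (hg : Differentiable ℝ g)
    (p v : Jet n j) :
    fderiv ℝ (fun q => g (projTo s q)) p v = fderiv ℝ g (projTo s p) (projTo s v) := by
  have he : (fun q : Jet n j => g (projTo s q)) = g ∘ (projL j s) := by
    funext q; simp [Function.comp, projL_apply]
  rw [he, fderiv_comp (x := p) (hg _) (projL j s).differentiableAt, (projL j s).fderiv]
  simp [projL_apply]

lemma pdt_comp {j s : ℕ} (g : Jet n s → ℝ) (hg : Differentiable ℝ g) (p : Jet n j) :
    pdt (fun q : Jet n j => g (projTo s q)) p = pdt g (projTo s p) := by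
  rw [pdt, fderiv_comp_projL g hg, projTo_vt, pdt]

lemma pdq_comp {j s : ℕ} (h : s ≤ j) (i : ℕ) (α : Fin n) (g : Jet n s → ℝ)
    (hg : Differentiable ℝ g) (p : Jet n j) :
    pdq i α (fun q : Jet n j => g (projTo s q)) p = pdq i α g (projTo s p) := by
  rw [pdq, fderiv_comp_projL g hg, projTo_vq h, pdq]

/-- `Dt` with `ℕ`-indexed sum and `coordq`. -/
lemma Dt_eq {j : ℕ} (f : Jet n j → ℝ) (p : Jet n (j + 1)) :
    Dt f p = pdt f (projTo j p) +
      ∑ i ∈ Finset.range (j + 1), ∑ α : Fin n,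
        coordq (i + 1) α p * pdq i α f (projTo j p) := by
  rw [Dt]
  congr 1
  rw [← Fin.sum_univ_eq_sum_range (fun i => ∑ α : Fin n,
    coordq (i + 1) α p * pdq i α f (projTo j p)) (j + 1)]
  refine Finset.sum_congr rfl fun i _ => Finset.sum_congr rfl fun α _ => ?_
  rw [snd_eq_coordq]
  simp [Fin.val_succ]

lemma Dt_comp {j s : ℕ} (h : s ≤ j) (g : Jet n s → ℝ) (hg : Differentiable ℝ g)
    (p : Jet n (j + 1)) :
    Dt (fun q : Jet n j => g (projTo s q)) p = Dt g (projTo (s + 1) p) := by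
  rw [Dt_eq, Dt_eq]
  have hps : projTo s (projTo j p) = projTo s p := projTo_projTo h p
  have hps' : projTo s (projTo (s + 1) p) = projTo s p := projTo_projTo (by omega) p
  rw [pdt_comp g hg, hps, hps']
  congr 1
  rw [← Finset.sum_subset (Finset.range_subset_range.2 (by omega : s + 1 ≤ j + 1))
    (fun i _ hi => ?_)]
  · refine Finset.sum_congr rfl fun i hi => Finset.sum_congr rfl fun α _ => ?_
    rw [pdq_comp h i α g hg, hps, coordq_projTo (by simp at hi; omega)]
  · refine Finset.sum_eq_zero fun α _ => ?_
    rw [pdq_comp h i α g hg, hps, pdq_zero (by simp at hi; omega)]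
    ring

end Jet
namespace Jet
variable {n : ℕ}

lemma contDiff_coordq {j : ℕ} (i : ℕ) (α : Fin n) :
    ContDiff ℝ (⊤ : ℕ∞) (coordq i α : Jet n j → ℝ) := by
  have : (coordq i α : Jet n j → ℝ) = ⇑(dq j i α) := by
    funext q; rw [dq_apply]
  rw [this]
  exact (dq j i α).contDiff

lemma contDiff_comp_projTo {j s : ℕ} {g : Jet n s → ℝ} (hg : ContDiff ℝ (⊤ : ℕ∞) g) :
    ContDiff ℝ (⊤ : ℕ∞) (fun q : Jet n j => g (projTo s q)) := by
  have : (fun q : Jet n j => g (projTo s q)) = g ∘ (projL j s) := by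
    funext q; simp [Function.comp, projL_apply]
  rw [this]
  exact hg.comp (projL j s).contDiff

lemma contDiff_pdt {j : ℕ} {f : Jet n j → ℝ} (hf : ContDiff ℝ (⊤ : ℕ∞) f) :
    ContDiff ℝ (⊤ : ℕ∞) (pdt f) := by
  have h1 : ContDiff ℝ (⊤ : ℕ∞) (fderiv ℝ f) := hf.fderiv_right (by simp)
  exact (ContinuousLinearMap.apply ℝ ℝ (vt : Jet n j)).contDiff.comp h1

lemma contDiff_pdq {j : ℕ} (i : ℕ) (α : Fin n) {f : Jet n j → ℝ}
    (hf : ContDiff ℝ (⊤ : ℕ∞) f) : ContDiff ℝ (⊤ : ℕ∞) (pdq i α f) := by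
  have h1 : ContDiff ℝ (⊤ : ℕ∞) (fderiv ℝ f) := hf.fderiv_right (by simp)
  exact (ContinuousLinearMap.apply ℝ ℝ (vq i α : Jet n j)).contDiff.comp h1

lemma contDiff_Dt {j : ℕ} {f : Jet n j → ℝ} (hf : ContDiff ℝ (⊤ : ℕ∞) f) :
    ContDiff ℝ (⊤ : ℕ∞) (Dt f) := by
  unfold Dt
  refine ContDiff.add (contDiff_comp_projTo (contDiff_pdt hf)) ?_
  refine ContDiff.sum fun i _ => ContDiff.sum fun α _ => ContDiff.mul ?_ ?_
  · have : (fun p : Jet n (j + 1) => p.2 i.succ α) =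
        (coordq (i.succ : ℕ) α : Jet n (j + 1) → ℝ) := by
      funext p; rw [snd_eq_coordq]
    rw [this]; exact contDiff_coordq _ _
  · exact contDiff_comp_projTo (contDiff_pdq _ _ hf)

lemma contDiff_DtIter {j : ℕ} (i : ℕ) {f : Jet n j → ℝ} (hf : ContDiff ℝ (⊤ : ℕ∞) f) :
    ContDiff ℝ (⊤ : ℕ∞) (DtIter i f) := by
  induction i with
  | zero => exact hf
  | succ i ih => exact contDiff_Dt ih

lemma contDiff_mom (k : ℕ) {L : Jet n k → ℝ} (hL : ContDiff ℝ (⊤ : ℕ∞) L)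
    (r : ℕ) (α : Fin n) : ContDiff ℝ (⊤ : ℕ∞) (mom k L r α) := by
  unfold mom
  refine ContDiff.sum fun i _ => ContDiff.mul contDiff_const ?_
  exact contDiff_comp_projTo (contDiff_DtIter i (contDiff_pdq _ _ hL))

end Jet
namespace Jet
variable {n : ℕ}

lemma fderiv_coordq {j : ℕ} (i : ℕ) (α : Fin n) (p : Jet n j) :
    fderiv ℝ (coordq i α : Jet n j → ℝ) p = dq j i α := by
  rw [show (coordq i α : Jet n j → ℝ) = ⇑(dq j i α) from
    funext fun q => (dq_apply i α q).symm, ContinuousLinearMap.fderiv]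

lemma fderiv_PC_apply {k : ℕ} (L : Jet n k → ℝ) (hL : ContDiff ℝ (⊤ : ℕ∞) L)
    (p u v : Jet n (2 * k - 1)) :
    fderiv ℝ (PC k L) p u v =
      (∑ r ∈ Finset.Icc 1 k, ∑ α : Fin n,
        fderiv ℝ (mom k L r α) p u * dq (2 * k - 1) (r - 1) α v)
      + (fderiv ℝ (fun q : Jet n (2 * k - 1) => L (projTo k q)) p u
          - ∑ r ∈ Finset.Icc 1 k, ∑ α : Fin n,
              (fderiv ℝ (mom k L r α) p u * coordq r α p
                + mom k L r α p * coordq r α u)) * dt (2 * k - 1) v := by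
  have hdm : ∀ (r : ℕ) (α : Fin n), DifferentiableAt ℝ (mom k L r α) p :=
    fun r α => ((contDiff_mom k hL r α).differentiable (by simp)).differentiableAt
  have hE : DifferentiableAt ℝ (fun q : Jet n (2 * k - 1) => L (projTo k q)) p :=
    ((contDiff_comp_projTo hL).differentiable (by simp)).differentiableAt
  have hcq : ∀ (r : ℕ) (α : Fin n),
      DifferentiableAt ℝ (coordq r α : Jet n (2 * k - 1) → ℝ) p :=
    fun r α => ((contDiff_coordq r α).differentiable (by simp)).differentiableAt
  have h1 : ∀ r ∈ Finset.Icc 1 k, DifferentiableAt ℝ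
      (fun p : Jet n (2 * k - 1) =>
        ∑ α : Fin n, mom k L r α p • dq (2 * k - 1) (r - 1) α) p :=
    fun r _ => DifferentiableAt.fun_sum fun α _ => (hdm r α).smul_const _
  have hS : DifferentiableAt ℝ (fun p : Jet n (2 * k - 1) =>
      ∑ r ∈ Finset.Icc 1 k, ∑ α : Fin n, mom k L r α p • dq (2 * k - 1) (r - 1) α) p :=
    DifferentiableAt.fun_sum h1
  have h2 : ∀ r ∈ Finset.Icc 1 k, DifferentiableAt ℝ
      (fun p : Jet n (2 * k - 1) => ∑ α : Fin n, mom k L r α p * coordq r α p) p :=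
    fun r _ => DifferentiableAt.fun_sum fun α _ => (hdm r α).mul (hcq r α)
  have hc : DifferentiableAt ℝ (fun p : Jet n (2 * k - 1) =>
      L (projTo k p) - ∑ r ∈ Finset.Icc 1 k, ∑ α : Fin n,
        mom k L r α p * coordq r α p) p := hE.sub (DifferentiableAt.fun_sum h2)
  have hPC : fderiv ℝ (PC k L) p =
      fderiv ℝ (fun p : Jet n (2 * k - 1) =>
        (∑ r ∈ Finset.Icc 1 k, ∑ α : Fin n, mom k L r α p • dq (2 * k - 1) (r - 1) α))
        p
      + fderiv ℝ (fun p : Jet n (2 * k - 1) =>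
          (L (projTo k p) - ∑ r ∈ Finset.Icc 1 k, ∑ α : Fin n,
            mom k L r α p * coordq r α p) • dt (2 * k - 1)) p := by
    rw [show PC k L = fun p : Jet n (2 * k - 1) =>
      (∑ r ∈ Finset.Icc 1 k, ∑ α : Fin n, mom k L r α p • dq (2 * k - 1) (r - 1) α)
      + (L (projTo k p) - ∑ r ∈ Finset.Icc 1 k, ∑ α : Fin n,
          mom k L r α p * coordq r α p) • dt (2 * k - 1) from rfl]
    exact fderiv_add hS (hc.smul_const _)
  rw [hPC]
  rw [fderiv_fun_sum h1, fderiv_smul_const (𝕜' := ℝ) (F := Jet n (2 * k - 1) →L[ℝ] ℝ) hc]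
  simp only [ContinuousLinearMap.add_apply, ContinuousLinearMap.sum_apply,
    ContinuousLinearMap.smulRight_apply, smul_eq_mul]
  congr 1
  · -- the S part
    refine Finset.sum_congr rfl fun r _ => ?_
    rw [fderiv_fun_sum fun α _ => ((hdm r α).smul_const (dq (2 * k - 1) (r - 1) α) :
      DifferentiableAt ℝ (fun y => mom k L r α y • dq (2 * k - 1) (r - 1) α) p)]
    simp only [ContinuousLinearMap.sum_apply]
    refine Finset.sum_congr rfl fun α _ => ?_
    rw [fderiv_smul_const (𝕜' := ℝ) (F := Jet n (2 * k - 1) →L[ℝ] ℝ) (hdm r α)]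
    simp [smul_eq_mul]
  · -- the c part
    have hc2 : fderiv ℝ (fun p : Jet n (2 * k - 1) =>
        L (projTo k p) - ∑ r ∈ Finset.Icc 1 k, ∑ α : Fin n,
          mom k L r α p * coordq r α p) p u =
        fderiv ℝ (fun q : Jet n (2 * k - 1) => L (projTo k q)) p u
          - ∑ r ∈ Finset.Icc 1 k, ∑ α : Fin n,
              (fderiv ℝ (mom k L r α) p u * coordq r α p
                + mom k L r α p * coordq r α u) := by
      rw [fderiv_fun_sub hE (DifferentiableAt.fun_sum h2), ContinuousLinearMap.sub_apply]
      congr 1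
      rw [fderiv_fun_sum h2, ContinuousLinearMap.sum_apply]
      refine Finset.sum_congr rfl fun r _ => ?_
      rw [fderiv_fun_sum (A := fun α y => mom k L r α y * coordq r α y)
        (fun α _ => (hdm r α).mul (hcq r α)), ContinuousLinearMap.sum_apply]
      refine Finset.sum_congr rfl fun α _ => ?_
      rw [fderiv_fun_mul (hdm r α) (hcq r α)]
      rw [fderiv_coordq]
      simp only [ContinuousLinearMap.add_apply, ContinuousLinearMap.smul_apply,
        smul_eq_mul, dq_apply]
      ring
    rw [hc2]
    simp [ContinuousLinearMap.smul_apply, smul_eq_mul]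

end Jet
namespace Jet
variable {n : ℕ}

lemma coordq_extendBy {k : ℕ} {i : ℕ} (h : i ≤ 2 * k - 1)
    (α : Fin n) (F : Jet n (2 * k - 1) → Fin n → ℝ) (p : Jet n (2 * k - 1)) :
    coordq i α (extendBy F p) = coordq i α p := by
  have h1 : i < 2 * k + 1 := by omega
  have h2 : i < 2 * k - 1 + 1 := by omega
  simp [coordq, extendBy, h1, h2, h]

lemma projTo_extendBy {k : ℕ} {s : ℕ} (h : s ≤ 2 * k - 1)
    (F : Jet n (2 * k - 1) → Fin n → ℝ) (p : Jet n (2 * k - 1)) :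
    projTo s (extendBy F p) = projTo s p := by
  refine Prod.ext rfl ?_
  funext i α
  have h1 : (i : ℕ) < 2 * k + 1 := by have := i.isLt; omega
  have h2 : (i : ℕ) < 2 * k - 1 + 1 := by have := i.isLt; omega
  simp [projTo, extendBy, h1, h2, (show (i : ℕ) ≤ 2 * k by omega),
    (show (i : ℕ) ≤ 2 * k - 1 by omega)]

lemma hvf_snd {k : ℕ} (hk : 1 ≤ k) (F : Jet n (2 * k - 1) → Fin n → ℝ)
    (p : Jet n (2 * k - 1)) (i : Fin (2 * k - 1 + 1)) (α : Fin n) :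
    (hvf F p).2 i α = coordq ((i : ℕ) + 1) α (extendBy F p) := by
  have h1 : (i : ℕ) + 1 < 2 * k + 1 := by have := i.isLt; omega
  by_cases h : (i : ℕ) + 1 < 2 * k - 1 + 1
  · have h' : (i : ℕ) < 2 * k - 1 := by omega
    simp [hvf, extendBy, coordq, h1, h', h]
  · have h' : ¬((i : ℕ) < 2 * k - 1) := by omega
    simp [hvf, extendBy, coordq, h1, h', h]

lemma fderiv_hvf_expand {k : ℕ} (hk : 1 ≤ k) (F : Jet n (2 * k - 1) → Fin n → ℝ)
    (f : Jet n (2 * k - 1) → ℝ) (p : Jet n (2 * k - 1)) :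
    fderiv ℝ f p (hvf F p) = pdt f p +
      ∑ i ∈ Finset.range (2 * k - 1 + 1), ∑ α : Fin n,
        coordq (i + 1) α (extendBy F p) * pdq i α f p := by
  rw [fderiv_expand]
  have h1 : (hvf F p).1 = 1 := rfl
  rw [h1, one_mul]
  congr 1
  rw [← Fin.sum_univ_eq_sum_range (fun i => ∑ α : Fin n,
    coordq (i + 1) α (extendBy F p) * pdq i α f p) (2 * k - 1 + 1)]
  exact Finset.sum_congr rfl fun i _ => Finset.sum_congr rfl fun α _ => by
    rw [hvf_snd hk]

lemma fderiv_hvf_Dt {k : ℕ} (hk : 1 ≤ k) (F : Jet n (2 * k - 1) → Fin n → ℝ)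
    (f : Jet n (2 * k - 1) → ℝ) (p : Jet n (2 * k - 1)) :
    fderiv ℝ f p (hvf F p) = Dt f (projTo (2 * k - 1 + 1) (extendBy F p)) := by
  rw [fderiv_hvf_expand hk, Dt_eq]
  have hp : projTo (2 * k - 1) (projTo (2 * k - 1 + 1) (extendBy F p)) = p := by
    rw [projTo_projTo (by omega), projTo_extendBy (le_refl _), projTo_self]
  rw [hp]
  congr 1
  refine Finset.sum_congr rfl fun i hi => Finset.sum_congr rfl fun α _ => ?_
  rw [coordq_projTo (by simp at hi; omega)]

lemma Dt_zero {j : ℕ} (p : Jet n (j + 1)) : Dt (fun _ : Jet n j => (0 : ℝ)) p = 0 := by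
  simp [Dt, pdt, pdq, fderiv_const]

lemma Dt_sum {j : ℕ} {ι : Type*} (s : Finset ι) (f : ι → Jet n j → ℝ)
    (hf : ∀ i ∈ s, Differentiable ℝ (f i)) (p : Jet n (j + 1)) :
    Dt (fun q => ∑ i ∈ s, f i q) p = ∑ i ∈ s, Dt (f i) p := by
  have hpdt : ∀ q : Jet n j, pdt (fun q => ∑ i ∈ s, f i q) q = ∑ i ∈ s, pdt (f i) q := by
    intro q
    rw [pdt, fderiv_fun_sum (fun i hi => (hf i hi).differentiableAt)]
    simp [pdt, ContinuousLinearMap.sum_apply]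
  have hpdq : ∀ (i' : ℕ) (α : Fin n) (q : Jet n j),
      pdq i' α (fun q => ∑ i ∈ s, f i q) q = ∑ i ∈ s, pdq i' α (f i) q := by
    intro i' α q
    rw [pdq, fderiv_fun_sum (fun i hi => (hf i hi).differentiableAt)]
    simp [pdq, ContinuousLinearMap.sum_apply]
  rw [Dt_eq]
  simp only [hpdt, hpdq, Finset.mul_sum]
  have hR : ∀ i ∈ s, Dt (f i) p = pdt (f i) (projTo j p) +
      ∑ x ∈ Finset.range (j + 1), ∑ α : Fin n,
        coordq (x + 1) α p * pdq x α (f i) (projTo j p) := fun i _ => Dt_eq _ _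
  rw [Finset.sum_congr rfl hR, Finset.sum_add_distrib]
  congr 1
  calc ∑ x ∈ Finset.range (j + 1), ∑ α : Fin n, ∑ i ∈ s,
          coordq (x + 1) α p * pdq x α (f i) (projTo j p)
      = ∑ x ∈ Finset.range (j + 1), ∑ i ∈ s, ∑ α : Fin n,
          coordq (x + 1) α p * pdq x α (f i) (projTo j p) :=
        Finset.sum_congr rfl fun x _ => Finset.sum_comm
    _ = ∑ i ∈ s, ∑ x ∈ Finset.range (j + 1), ∑ α : Fin n,
          coordq (x + 1) α p * pdq x α (f i) (projTo j p) := Finset.sum_comm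

lemma Dt_const_mul {j : ℕ} (c : ℝ) (f : Jet n j → ℝ) (hf : Differentiable ℝ f)
    (p : Jet n (j + 1)) : Dt (fun q => c * f q) p = c * Dt f p := by
  have hpdt : ∀ q : Jet n j, pdt (fun q => c * f q) q = c * pdt f q := by
    intro q
    rw [pdt, fderiv_const_mul (hf q)]
    simp [pdt]
  have hpdq : ∀ (i' : ℕ) (α : Fin n) (q : Jet n j),
      pdq i' α (fun q => c * f q) q = c * pdq i' α f q := by
    intro i' α q
    rw [pdq, fderiv_const_mul (hf q)]
    simp [pdq]
  rw [Dt_eq, Dt_eq, hpdt, mul_add, Finset.mul_sum]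
  congr 1
  refine Finset.sum_congr rfl fun i _ => ?_
  rw [Finset.mul_sum]
  refine Finset.sum_congr rfl fun α _ => ?_
  rw [hpdq]; ring

end Jet
namespace Jet
variable {n : ℕ}

lemma mom_succ_top {k : ℕ} (L : Jet n k → ℝ) (α : Fin n) (p : Jet n (2 * k - 1)) :
    mom k L (k + 1) α p = 0 := by
  have h0 : k - (k + 1) + 1 = 1 := by omega
  rw [mom, h0, Finset.sum_range_one]
  have : DtIter 0 (pdq (k + 1 + 0) α L) (projTo (k + 0) p) =
      pdq (k + 1) α L (projTo k p) := rfl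
  rw [this, pdq_zero (le_refl (k + 1))]
  ring

lemma mom_rec {k : ℕ} (hk : 1 ≤ k) (L : Jet n k → ℝ) (hL : ContDiff ℝ (⊤ : ℕ∞) L)
    {r : ℕ} (hr1 : 1 ≤ r) (hrk : r ≤ k) (α : Fin n) (P : Jet n (2 * k)) :
    mom k L r α (projTo (2 * k - 1) P) =
      pdq r α L (projTo k P) - Dt (mom k L (r + 1) α) (projTo (2 * k - 1 + 1) P) := by
  have hL1 : mom k L r α (projTo (2 * k - 1) P) =
      ∑ i ∈ Finset.range (k - r + 1), (-1 : ℝ) ^ i *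
        DtIter i (pdq (r + i) α L) (projTo (k + i) P) := by
    rw [mom]
    refine Finset.sum_congr rfl fun i hi => ?_
    rw [projTo_projTo (by simp at hi; omega) P]
  rw [hL1, Finset.sum_range_succ']
  have hf0 : (-1 : ℝ) ^ 0 * DtIter 0 (pdq (r + 0) α L) (projTo (k + 0) P) =
      pdq r α L (projTo k P) := by
    have : DtIter 0 (pdq (r + 0) α L) (projTo (k + 0) P) =
        pdq r α L (projTo k P) := rfl
    rw [this]; ring
  rw [hf0]
  rcases eq_or_lt_of_le hrk with heq | hlt
  · have hz : mom k L (r + 1) α = fun _ : Jet n (2 * k - 1) => (0 : ℝ) :=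
      funext fun q => by rw [heq]; exact mom_succ_top L α q
    rw [hz, Dt_zero, show k - r = 0 from by omega, Finset.range_zero,
      Finset.sum_empty, zero_add]
    ring
  · -- r < k
    have hterm : ∀ i ∈ Finset.range (k - (r + 1) + 1),
        Dt (fun q : Jet n (2 * k - 1) =>
          (-1 : ℝ) ^ i * DtIter i (pdq (r + 1 + i) α L) (projTo (k + i) q))
          (projTo (2 * k - 1 + 1) P) =
        (-1 : ℝ) ^ i * DtIter (i + 1) (pdq (r + 1 + i) α L) (projTo (k + (i + 1)) P) := by
      intro i hi
      simp only [Finset.mem_range] at hi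
      have hdiffg : Differentiable ℝ (DtIter i (pdq (r + 1 + i) α L)) :=
        (contDiff_DtIter i (contDiff_pdq _ _ hL)).differentiable (by simp)
      have hdiffc : Differentiable ℝ (fun q : Jet n (2 * k - 1) =>
          DtIter i (pdq (r + 1 + i) α L) (projTo (k + i) q)) :=
        (contDiff_comp_projTo (contDiff_DtIter i (contDiff_pdq _ _ hL))).differentiable
          (by simp)
      rw [Dt_const_mul _ _ hdiffc, Dt_comp (by omega) _ hdiffg,
        projTo_projTo (by omega) P]
      rfl
    have hmom : Dt (mom k L (r + 1) α) (projTo (2 * k - 1 + 1) P) =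
        ∑ i ∈ Finset.range (k - (r + 1) + 1),
          Dt (fun q : Jet n (2 * k - 1) =>
            (-1 : ℝ) ^ i * DtIter i (pdq (r + 1 + i) α L) (projTo (k + i) q))
            (projTo (2 * k - 1 + 1) P) := by
      rw [show mom k L (r + 1) α = fun q : Jet n (2 * k - 1) =>
        ∑ i ∈ Finset.range (k - (r + 1) + 1), (-1 : ℝ) ^ i *
          DtIter i (pdq (r + 1 + i) α L) (projTo (k + i) q) from rfl]
      exact Dt_sum _ _ (fun i _ => (ContDiff.mul contDiff_const
        (contDiff_comp_projTo (contDiff_DtIter i (contDiff_pdq _ _ hL)))).differentiable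
          (by simp)) _
    rw [hmom, Finset.sum_congr rfl hterm,
      show k - (r + 1) + 1 = k - r from by omega]
    have hAB : ∑ i ∈ Finset.range (k - r), (-1 : ℝ) ^ (i + 1) *
          DtIter (i + 1) (pdq (r + (i + 1)) α L) (projTo (k + (i + 1)) P)
        = -∑ i ∈ Finset.range (k - r), (-1 : ℝ) ^ i *
            DtIter (i + 1) (pdq (r + 1 + i) α L) (projTo (k + (i + 1)) P) := by
      rw [← Finset.sum_neg_distrib]
      refine Finset.sum_congr rfl fun i _ => ?_
      rw [show r + 1 + i = r + (i + 1) from by omega, pow_succ]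
      ring
    rw [hAB]
    ring

end Jet
namespace Jet
variable {n : ℕ}

private lemma key_alg (k : ℕ) (hk : 1 ≤ k) (a m A c w : ℕ → ℝ) (e t : ℝ)
    (hA1 : A 1 = a 0 - e)
    (hA : ∀ i, 1 ≤ i → i < k → A (i + 1) = a i - m i)
    (hmk : m k = a k) :
    (∑ i ∈ Finset.range k, A (i + 1) * w i)
      + ((∑ i ∈ Finset.range (k + 1), c (i + 1) * a i)
          - ∑ i ∈ Finset.range k, (A (i + 1) * c (i + 1) + m (i + 1) * c (i + 2))) * t
      - (∑ i ∈ Finset.range (k + 1), w i * a i)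
      + ∑ i ∈ Finset.range k, m (i + 1) * w (i + 1)
    = -(e * (w 0 - c 1 * t)) := by
  obtain ⟨k', rfl⟩ : ∃ k', k = k' + 1 := ⟨k - 1, by omega⟩
  have hsplitA : ∀ x : ℕ → ℝ, ∑ i ∈ Finset.range (k' + 1), A (i + 1) * x i
      = (∑ i ∈ Finset.range k', x (i + 1) * a (i + 1)
          - ∑ i ∈ Finset.range k', m (i + 1) * x (i + 1)) + (a 0 - e) * x 0 := by
    intro x
    rw [Finset.sum_range_succ']
    simp only [Nat.zero_add]
    rw [hA1, ← Finset.sum_sub_distrib]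
    congr 1
    refine Finset.sum_congr rfl fun i hi => ?_
    simp only [Finset.mem_range] at hi
    rw [hA (i + 1) (by omega) (by omega)]
    ring
  have hw := hsplitA w
  have hc := hsplitA fun i => c (i + 1)
  have e2c : ∑ i ∈ Finset.range (k' + 1 + 1), c (i + 1) * a i
      = (∑ i ∈ Finset.range k', c (i + 1 + 1) * a (i + 1) + c (0 + 1) * a 0)
        + c (k' + 1 + 1) * a (k' + 1) := by
    rw [Finset.sum_range_succ, Finset.sum_range_succ']
  have e2w : ∑ i ∈ Finset.range (k' + 1 + 1), w i * a i
      = (∑ i ∈ Finset.range k', w (i + 1) * a (i + 1) + w 0 * a 0)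
        + w (k' + 1) * a (k' + 1) := by
    rw [Finset.sum_range_succ, Finset.sum_range_succ']
  have e3c : ∑ i ∈ Finset.range (k' + 1), m (i + 1) * c (i + 2)
      = ∑ i ∈ Finset.range k', m (i + 1) * c (i + 2) + m (k' + 1) * c (k' + 1 + 1)
      := by rw [Finset.sum_range_succ]
  have e3w : ∑ i ∈ Finset.range (k' + 1), m (i + 1) * w (i + 1)
      = ∑ i ∈ Finset.range k', m (i + 1) * w (i + 1) + m (k' + 1) * w (k' + 1)
      := by rw [Finset.sum_range_succ]
  rw [Finset.sum_add_distrib, hw, hc, e2c, e2w, e3c, e3w, hmk]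
  simp only [Nat.zero_add, show ∀ i : ℕ, i + 1 + 1 = i + 2 from fun _ => rfl]
  ring

end Jet
namespace Jet
variable {n : ℕ}

lemma fderiv_E_expand {k : ℕ} (hk : 1 ≤ k) (L : Jet n k → ℝ) (hL : ContDiff ℝ (⊤ : ℕ∞) L)
    (p u : Jet n (2 * k - 1)) :
    fderiv ℝ (fun q : Jet n (2 * k - 1) => L (projTo k q)) p u =
      u.1 * pdt (fun q : Jet n (2 * k - 1) => L (projTo k q)) p +
        ∑ α : Fin n, ∑ i ∈ Finset.range (k + 1),
          coordq i α u * pdq i α L (projTo k p) := by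
  rw [fderiv_expand]
  congr 1
  calc ∑ i : Fin (2 * k - 1 + 1), ∑ α : Fin n,
        u.2 i α * pdq (i : ℕ) α (fun q : Jet n (2 * k - 1) => L (projTo k q)) p
      = ∑ i ∈ Finset.range (2 * k - 1 + 1), ∑ α : Fin n,
          coordq i α u * pdq i α L (projTo k p) := by
        rw [← Fin.sum_univ_eq_sum_range (fun i => ∑ α : Fin n,
          coordq i α u * pdq i α L (projTo k p)) (2 * k - 1 + 1)]
        refine Finset.sum_congr rfl fun i _ => Finset.sum_congr rfl fun α _ => ?_
        rw [snd_eq_coordq, pdq_comp (by omega) (i : ℕ) α L (hL.differentiable (by simp))]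
    _ = ∑ i ∈ Finset.range (k + 1), ∑ α : Fin n,
          coordq i α u * pdq i α L (projTo k p) := by
        refine (Finset.sum_subset (Finset.range_subset_range.2 (by omega)) fun i hi' hi => ?_).symm
        refine Finset.sum_eq_zero fun α _ => ?_
        simp only [Finset.mem_range] at hi' hi
        rw [pdq_zero (by omega)]
        ring
    _ = ∑ α : Fin n, ∑ i ∈ Finset.range (k + 1),
          coordq i α u * pdq i α L (projTo k p) := Finset.sum_comm

end Jet
namespace Jet
variable {n : ℕ}

lemma dPC_formula {k : ℕ} (hk : 1 ≤ k) (L : Jet n k → ℝ) (hL : ContDiff ℝ (⊤ : ℕ∞) L)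
    (F : Jet n (2 * k - 1) → Fin n → ℝ) (p v : Jet n (2 * k - 1)) :
    dPC k L p (hvf F p) v =
      -∑ α : Fin n, EL k L α (extendBy F p) *
        (dq (2 * k - 1) 0 α v - coordq 1 α p * dt (2 * k - 1) v) := by
  set Ph := extendBy F p with hPh
  have hF1 : projTo (2 * k - 1) Ph = p := by
    rw [hPh, projTo_extendBy (le_refl _), projTo_self]
  have hF2 : projTo k Ph = projTo k p := projTo_extendBy (by omega) F p
  have hcp : ∀ i : ℕ, i ≤ 2 * k - 1 → ∀ α : Fin n, coordq i α Ph = coordq i α p :=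
    fun i hi α => coordq_extendBy hi α F p
  have hcX : ∀ i : ℕ, i < 2 * k - 1 + 1 → ∀ α : Fin n,
      coordq i α (hvf F p) = coordq (i + 1) α Ph := by
    intro i hi α
    have h1 : coordq i α (hvf F p) = (hvf F p).2 ⟨i, hi⟩ α := by simp [coordq, hi]
    rw [h1, hvf_snd hk]
  have hAeq : ∀ (r : ℕ) (α : Fin n), fderiv ℝ (mom k L r α) p (hvf F p) =
      Dt (mom k L r α) (projTo (2 * k - 1 + 1) Ph) :=
    fun r α => fderiv_hvf_Dt hk F _ p
  have hrec : ∀ r : ℕ, 1 ≤ r → r ≤ k → ∀ α : Fin n, mom k L r α p =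
      pdq r α L (projTo k p) - Dt (mom k L (r + 1) α) (projTo (2 * k - 1 + 1) Ph) := by
    intro r h1 h2 α
    have h := mom_rec hk L hL h1 h2 α Ph
    rw [hF1, hF2] at h
    exact h
  have hA1 : ∀ α : Fin n, Dt (mom k L 1 α) (projTo (2 * k - 1 + 1) Ph) =
      pdq 0 α L (projTo k p) - EL k L α Ph := by
    intro α
    rw [EL, hF2]
    ring
  have hmk : ∀ α : Fin n, mom k L k α p = pdq k α L (projTo k p) := by
    intro α
    rw [hrec k hk le_rfl α,
      show mom k L (k + 1) α = fun _ : Jet n (2 * k - 1) => (0 : ℝ) from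
        funext fun q => mom_succ_top L α q,
      Dt_zero]
    ring
  have h1 : ∑ r ∈ Finset.Icc 1 k, ∑ α : Fin n,
        fderiv ℝ (mom k L r α) p (hvf F p) * dq (2 * k - 1) (r - 1) α v
      = ∑ α : Fin n, ∑ i ∈ Finset.range k,
          Dt (mom k L (i + 1) α) (projTo (2 * k - 1 + 1) Ph) * coordq i α v := by
    rw [← Finset.Ico_add_one_right_eq_Icc, Finset.sum_Ico_eq_sum_range, Nat.add_sub_cancel, Finset.sum_comm]
    refine Finset.sum_congr rfl fun α _ => Finset.sum_congr rfl fun i _ => ?_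
    rw [dq_apply, show 1 + i - 1 = i from by omega, show 1 + i = i + 1 from by omega,
      hAeq]
  have h2 : ∑ r ∈ Finset.Icc 1 k, ∑ α : Fin n,
        (fderiv ℝ (mom k L r α) p (hvf F p) * coordq r α p
          + mom k L r α p * coordq r α (hvf F p))
      = ∑ α : Fin n, ∑ i ∈ Finset.range k,
          (Dt (mom k L (i + 1) α) (projTo (2 * k - 1 + 1) Ph) * coordq (i + 1) α Ph
            + mom k L (i + 1) α p * coordq (i + 2) α Ph) := by
    rw [← Finset.Ico_add_one_right_eq_Icc, Finset.sum_Ico_eq_sum_range, Nat.add_sub_cancel, Finset.sum_comm]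
    refine Finset.sum_congr rfl fun α _ => Finset.sum_congr rfl fun i hi => ?_
    simp only [Finset.mem_range] at hi
    rw [show 1 + i = i + 1 from by omega, hAeq, ← hcp (i + 1) (by omega) α,
      hcX (i + 1) (by omega) α]
  have h3 : ∑ r ∈ Finset.Icc 1 k, ∑ α : Fin n,
        fderiv ℝ (mom k L r α) p v * dq (2 * k - 1) (r - 1) α (hvf F p)
      = ∑ r ∈ Finset.Icc 1 k, ∑ α : Fin n,
          fderiv ℝ (mom k L r α) p v * coordq r α p := by
    refine Finset.sum_congr rfl fun r hr => Finset.sum_congr rfl fun α _ => ?_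
    simp only [Finset.mem_Icc] at hr
    rw [dq_apply, hcX (r - 1) (by omega) α, show r - 1 + 1 = r from by omega,
      hcp r (by omega) α]
  have h4 : ∑ r ∈ Finset.Icc 1 k, ∑ α : Fin n, mom k L r α p * coordq r α v
      = ∑ α : Fin n, ∑ i ∈ Finset.range k,
          mom k L (i + 1) α p * coordq (i + 1) α v := by
    rw [← Finset.Ico_add_one_right_eq_Icc, Finset.sum_Ico_eq_sum_range, Nat.add_sub_cancel, Finset.sum_comm]
    refine Finset.sum_congr rfl fun α _ => Finset.sum_congr rfl fun i _ => ?_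
    rw [show 1 + i = i + 1 from by omega]
  have h6 : ∑ r ∈ Finset.Icc 1 k, ∑ α : Fin n,
        (fderiv ℝ (mom k L r α) p v * coordq r α p + mom k L r α p * coordq r α v)
      = (∑ r ∈ Finset.Icc 1 k, ∑ α : Fin n,
          fderiv ℝ (mom k L r α) p v * coordq r α p)
        + ∑ r ∈ Finset.Icc 1 k, ∑ α : Fin n, mom k L r α p * coordq r α v := by
    rw [← Finset.sum_add_distrib]
    exact Finset.sum_congr rfl fun r _ => Finset.sum_add_distrib
  have hEX : fderiv ℝ (fun q : Jet n (2 * k - 1) => L (projTo k q)) p (hvf F p) =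
      pdt (fun q : Jet n (2 * k - 1) => L (projTo k q)) p
        + ∑ α : Fin n, ∑ i ∈ Finset.range (k + 1),
            coordq (i + 1) α Ph * pdq i α L (projTo k p) := by
    rw [fderiv_E_expand hk L hL, show (hvf F p).1 = 1 from rfl, one_mul]
    congr 1
    refine Finset.sum_congr rfl fun α _ => Finset.sum_congr rfl fun i hi => ?_
    simp only [Finset.mem_range] at hi
    rw [hcX i (by omega) α]
  have hEv := fderiv_E_expand hk L hL p v
  have hdtv : dt (2 * k - 1) v = v.1 := rfl
  have hdtX : dt (2 * k - 1) (hvf F p) = 1 := rfl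
  have hper : ∀ α ∈ (Finset.univ : Finset (Fin n)),
      (∑ i ∈ Finset.range k,
          Dt (mom k L (i + 1) α) (projTo (2 * k - 1 + 1) Ph) * coordq i α v)
        + ((∑ i ∈ Finset.range (k + 1), coordq (i + 1) α Ph * pdq i α L (projTo k p))
            - ∑ i ∈ Finset.range k,
                (Dt (mom k L (i + 1) α) (projTo (2 * k - 1 + 1) Ph) * coordq (i + 1) α Ph
                  + mom k L (i + 1) α p * coordq (i + 2) α Ph)) * v.1
        - (∑ i ∈ Finset.range (k + 1), coordq i α v * pdq i α L (projTo k p))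
        + ∑ i ∈ Finset.range k, mom k L (i + 1) α p * coordq (i + 1) α v
      = -(EL k L α Ph * (coordq 0 α v - coordq 1 α Ph * v.1)) := by
    intro α _
    exact key_alg k hk (fun i => pdq i α L (projTo k p)) (fun r => mom k L r α p)
      (fun r => Dt (mom k L r α) (projTo (2 * k - 1 + 1) Ph))
      (fun i => coordq i α Ph) (fun i => coordq i α v) (EL k L α Ph) v.1
      (by exact hA1 α)
      (fun i hi1 hi2 => by rw [hrec i hi1 (le_of_lt hi2) α]; ring)
      (by exact hmk α)
  have hRHS : -∑ α : Fin n, EL k L α Ph *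
        (dq (2 * k - 1) 0 α v - coordq 1 α p * v.1)
      = ∑ α : Fin n, -(EL k L α Ph * (coordq 0 α v - coordq 1 α Ph * v.1)) := by
    rw [← Finset.sum_neg_distrib]
    refine Finset.sum_congr rfl fun α _ => ?_
    rw [dq_apply, hcp 1 (by omega) α]
  rw [dPC, fderiv_PC_apply L hL p (hvf F p) v, fderiv_PC_apply L hL p v (hvf F p),
    h1, h2, h3, h6, h4, hEX, hEv, hdtv, hdtX, hRHS, ← Finset.sum_congr rfl hper]
  simp only [mul_one, sub_mul, Finset.sum_add_distrib, Finset.sum_sub_distrib,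
    ← Finset.sum_mul]
  ring

end Jet
/-- For a smooth `k`-th order Lagrangian `L` and a smooth map
`F : J^(2k−1) → ℝ^n`, with `X(p) := (1, q_1, …, q_(2k−1), F(p))`, one has for every `p`:
`i(X(p)) dΘ_L(p) = − Σ_α L^0_α(t, q_0, …, q_(2k−1), F(p)) (dq_0^α − q_1^α dt)`;
in particular `i(X(p)) dΘ_L(p) = 0` iff `L^0_α(t, q_0, …, q_(2k−1), F(p)) = 0` for all `α`. -/
theorem stmt0 {n : ℕ} (hn : 1 ≤ n) (k : ℕ) (hk : 1 ≤ k)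
    (L : Jet n k → ℝ) (hL : ContDiff ℝ (⊤ : ℕ∞) L)
    (F : Jet n (2 * k - 1) → Fin n → ℝ) (hF : ContDiff ℝ (⊤ : ℕ∞) F) :
    ∀ p : Jet n (2 * k - 1),
      (∀ v : Jet n (2 * k - 1),
        Jet.dPC k L p (Jet.hvf F p) v =
          -∑ α : Fin n, Jet.EL k L α (Jet.extendBy F p) *
            (Jet.dq (2 * k - 1) 0 α v - Jet.coordq 1 α p * Jet.dt (2 * k - 1) v)) ∧
      ((∀ v : Jet n (2 * k - 1), Jet.dPC k L p (Jet.hvf F p) v = 0) ↔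
        ∀ α : Fin n, Jet.EL k L α (Jet.extendBy F p) = 0) := by
  intro p
  have hmain : ∀ v : Jet n (2 * k - 1),
      Jet.dPC k L p (Jet.hvf F p) v =
        -∑ α : Fin n, Jet.EL k L α (Jet.extendBy F p) *
          (Jet.dq (2 * k - 1) 0 α v - Jet.coordq 1 α p * Jet.dt (2 * k - 1) v) :=
    fun v => Jet.dPC_formula hk L hL F p v
  refine ⟨hmain, ?_, ?_⟩
  · intro h0 α
    have h := h0 (Jet.vq 0 α)
    rw [hmain] at h
    have hterm : ∀ β : Fin n, Jet.EL k L β (Jet.extendBy F p) *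
        (Jet.dq (2 * k - 1) 0 β (Jet.vq 0 α) -
          Jet.coordq 1 β p * Jet.dt (2 * k - 1) (Jet.vq 0 α))
        = if α = β then Jet.EL k L α (Jet.extendBy F p) else 0 := by
      intro β
      have hdt : Jet.dt (2 * k - 1) (Jet.vq 0 α : Jet n (2 * k - 1)) = 0 := rfl
      rw [Jet.dq_apply, hdt]
      by_cases hb : α = β
      · subst hb
        simp [Jet.coordq, Jet.vq]
      · have hb' : ¬(β = α) := fun hh => hb hh.symm
        simp [Jet.coordq, Jet.vq, hb, hb']
    rw [Finset.sum_congr rfl (fun β _ => hterm β), Finset.sum_ite_eq] at h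
    simp at h
    linarith [h]
  · intro hEL v
    rw [hmain v]
    simp [hEL]
end
end

section
/- (Order of the Euler–Lagrange equations for second-order field theories.) Let L : J^2π → ℝ be a smooth second-order Lagrangian (regarded on higher-order jet spaces via the projections) and let s ∈ {1, 2}. Define the Poincaré–Cartan coefficient functions L^{ij}_α := (1/n(ij)) ∂L/∂u^α_(1_i+1_j) (smooth functions on J^2π, with n(ij) := 1 if i = j and 2 otherwise, the derivative taken with respect to the independent coordinate indexed by the multi-index 1_i+1_j), L^i_α := ∂L/∂u_i^α − Σ_{j=1}^{m} D_j L^{ij}_α (smooth functions on J^3π), and L^0_α := ∂L/∂u^α − Σ_{i=1}^{m} D_i L^i_α (smooth functions on J^4π). If every L^i_α and every L^{ij}_α is π^3_s-basic, then every L^0_α is π^4_(s+1)-basic; that is, the Euler–Lagrange equations are of order at most s+1. -/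
noncomputable section

/-- Multi-indices `I ∈ ℕ^m` of length `|I| = Σ_i I(i) ≤ k`. -/
abbrev MIdx (m k : ℕ) : Type := {I : Fin m → ℕ // ∑ i, I i ≤ k}

noncomputable instance MIdx.instFintype (m k : ℕ) : Fintype (MIdx m k) :=
  Fintype.ofInjective
    (fun (I : MIdx m k) (i : Fin m) =>
      (⟨I.1 i, by
        have h := Finset.single_le_sum (f := I.1) (fun j _ => Nat.zero_le _)
          (Finset.mem_univ i)
        have := I.2
        omega⟩ : Fin (k + 1)))
    (fun I J h => Subtype.ext (funext fun i => congrArg Fin.val (congrFun h i)))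

/-- The `k`-th order jet space `J^kπ` of maps `ℝ^m → ℝ^n`, with coordinates
`(x^i, u_I^α)` for multi-indices `|I| ≤ k`. -/
abbrev JetF (n m k : ℕ) : Type := (Fin m → ℝ) × (MIdx m k → Fin n → ℝ)

namespace JetF

variable {n m : ℕ}

/-- The projection (truncation) `J^kπ → J^sπ` forgetting the coordinates `u_I^α` for
`|I| > s` (padding with `0` in the irrelevant case `s > k`). -/
def projTo {k : ℕ} (s : ℕ) (p : JetF n m k) : JetF n m s :=
  (p.1, fun I α => if h : ∑ i, I.1 i ≤ k then p.2 ⟨I.1, h⟩ α else 0)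

/-- The coordinate function `u_I^α` (zero if out of range). -/
def coordu {k : ℕ} (I : Fin m → ℕ) (α : Fin n) (p : JetF n m k) : ℝ :=
  if h : ∑ i, I i ≤ k then p.2 ⟨I, h⟩ α else 0

/-- The multi-index `1_i`. -/
def e (i : Fin m) : Fin m → ℕ := fun j => if j = i then 1 else 0

/-- The tangent vector in the `x^i`-direction. -/
def vx {k : ℕ} (i : Fin m) : JetF n m k := (Pi.single i 1, 0)

/-- The tangent vector in the `u_I^α`-direction (zero vector if `|I| > k`). -/
def vu {k : ℕ} (I : Fin m → ℕ) (α : Fin n) : JetF n m k :=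
  (0, fun J β => if J.1 = I ∧ β = α then 1 else 0)

/-- The partial derivative `∂f/∂x^i`. -/
def pdx {k : ℕ} (i : Fin m) (f : JetF n m k → ℝ) (p : JetF n m k) : ℝ :=
  fderiv ℝ f p (vx i)

/-- The partial derivative `∂f/∂u_I^α`. -/
def pdu {k : ℕ} (I : Fin m → ℕ) (α : Fin n) (f : JetF n m k → ℝ) (p : JetF n m k) : ℝ :=
  fderiv ℝ f p (vu I α)

/-- The `i`-th coordinate total derivative
`D_i f = ∂f/∂x^i + Σ_{|I|≤k} Σ_α u_(I+1_i)^α ∂f/∂u_I^α : J^(k+1)π → ℝ`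
of `f : J^kπ → ℝ`. -/
def Dtot {k : ℕ} (i : Fin m) (f : JetF n m k → ℝ) (p : JetF n m (k + 1)) : ℝ :=
  pdx i f (projTo k p) +
    ∑ I : MIdx m k, ∑ α : Fin n,
      coordu (fun j => I.1 j + e i j) α p * pdu I.1 α f (projTo k p)

/-- `f : J^kπ → ℝ` is `π^k_s`-basic: it factors through the projection `J^kπ → J^sπ`. -/
def BasicF {k : ℕ} (s : ℕ) (f : JetF n m k → ℝ) : Prop :=
  ∃ g : JetF n m s → ℝ, ∀ p, f p = g (projTo s p)

/-- The partial derivative of a map `φ : ℝ^m → ℝ^n` in the `i`-th coordinate direction. -/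
def pd (i : Fin m) (φ : (Fin m → ℝ) → Fin n → ℝ) : (Fin m → ℝ) → Fin n → ℝ :=
  fun x => fderiv ℝ φ x (Pi.single i 1)

/-- The iterated partial derivative `∂^I = ∂^{|I|}/∂(x^1)^{I(1)}⋯∂(x^m)^{I(m)}`. -/
def pdMulti (I : Fin m → ℕ) (φ : (Fin m → ℝ) → Fin n → ℝ) : (Fin m → ℝ) → Fin n → ℝ :=
  (List.finRange m).foldr (fun i ψ => (pd i)^[I i] ψ) φ

/-- The `k`-th prolongation `j^kφ : ℝ^m → J^kπ` of a map `φ : ℝ^m → ℝ^n`. -/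
def prolF (k : ℕ) (φ : (Fin m → ℝ) → Fin n → ℝ) (x : Fin m → ℝ) : JetF n m k :=
  (x, fun I α => pdMulti I.1 φ x α)

end JetF

namespace JetF

/-- The combinatorial factor `n(ij)`. -/
def nfac {m : ℕ} (i j : Fin m) : ℝ := if i = j then 1 else 2

/-- The Poincaré–Cartan coefficient `L^{ij}_α := (1/n(ij)) ∂L/∂u^α_(1_i+1_j)` of a
second-order Lagrangian. -/
def PCij {n m : ℕ} (L : JetF n m 2 → ℝ) (i j : Fin m) (α : Fin n) (p : JetF n m 2) : ℝ :=
  (1 / nfac i j) * pdu (fun l => e i l + e j l) α L p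

/-- The Poincaré–Cartan coefficient `L^i_α := ∂L/∂u_i^α − Σ_j D_j L^{ij}_α : J^3π → ℝ`. -/
def PCi {n m : ℕ} (L : JetF n m 2 → ℝ) (i : Fin m) (α : Fin n) (p : JetF n m 3) : ℝ :=
  pdu (e i) α L (projTo 2 p) - ∑ j : Fin m, Dtot j (PCij L i j α) p

/-- The Euler–Lagrange function `L^0_α := ∂L/∂u^α − Σ_i D_i L^i_α : J^4π → ℝ`. -/
def PCzero {n m : ℕ} (L : JetF n m 2 → ℝ) (α : Fin n) (p : JetF n m 4) : ℝ :=
  pdu (fun _ => 0) α L (projTo 2 p) - ∑ i : Fin m, Dtot i (PCi L i α) p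

end JetF


namespace JetF

variable {n m : ℕ}

/-- The zero-padding section `J^sπ → J^kπ` of the projection. -/
def sectF (s k : ℕ) (q : JetF n m s) : JetF n m k :=
  (q.1, fun I α => if h : ∑ i, I.1 i ≤ s then q.2 ⟨I.1, h⟩ α else 0)

/-- `projTo` as a continuous linear map. -/
def projL (k s : ℕ) : JetF n m k →L[ℝ] JetF n m s :=
  LinearMap.toContinuousLinearMap
    { toFun := projTo s
      map_add' := by
        intro p q
        refine Prod.ext rfl (funext fun I => funext fun α => ?_)
        by_cases h : ∑ i, I.1 i ≤ k <;> simp [projTo, h]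
      map_smul' := by
        intro c p
        refine Prod.ext rfl (funext fun I => funext fun α => ?_)
        by_cases h : ∑ i, I.1 i ≤ k <;> simp [projTo, h] }

@[simp] lemma projL_apply {k s : ℕ} (p : JetF n m k) : projL k s p = projTo s p := rfl

/-- `sectF` as a continuous linear map. -/
def sectL (s k : ℕ) : JetF n m s →L[ℝ] JetF n m k :=
  LinearMap.toContinuousLinearMap
    { toFun := sectF s k
      map_add' := by
        intro p q
        refine Prod.ext rfl (funext fun I => funext fun α => ?_)
        by_cases h : ∑ i, I.1 i ≤ s <;> simp [sectF, h]
      map_smul' := by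
        intro c p
        refine Prod.ext rfl (funext fun I => funext fun α => ?_)
        by_cases h : ∑ i, I.1 i ≤ s <;> simp [sectF, h] }

@[simp] lemma sectL_apply {s k : ℕ} (q : JetF n m s) : sectL s k q = sectF s k q := rfl

lemma projTo_projTo {k a b : ℕ} (hab : a ≤ b) (p : JetF n m k) :
    projTo a (projTo b p) = projTo a p := by
  refine Prod.ext rfl (funext fun I => funext fun α => ?_)
  have h : ∑ i, I.1 i ≤ b := le_trans I.2 hab
  simp [projTo, h]

lemma projTo_sectF {s k a : ℕ} (has : a ≤ s) (hak : a ≤ k) (q : JetF n m s) :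
    projTo a (sectF s k q) = projTo a q := by
  refine Prod.ext rfl (funext fun I => funext fun α => ?_)
  have h1 : ∑ i, I.1 i ≤ k := le_trans I.2 hak
  have h2 : ∑ i, I.1 i ≤ s := le_trans I.2 has
  simp [projTo, sectF, h1, h2]

lemma coordu_projTo {k a : ℕ} {I : Fin m → ℕ} (hI : ∑ j, I j ≤ a) (α : Fin n)
    (p : JetF n m k) : coordu I α (projTo a p) = coordu I α p := by
  simp [coordu, projTo, hI]

lemma coordu_sectF {s k : ℕ} {I : Fin m → ℕ} (hI : ∑ j, I j ≤ s) (hk : ∑ j, I j ≤ k)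
    (α : Fin n) (q : JetF n m s) : coordu I α (sectF s k q) = coordu I α q := by
  simp [coordu, sectF, hI, hk]

lemma projTo_vu {k s : ℕ} {I : Fin m → ℕ} (hI : s < ∑ j, I j) (α : Fin n) :
    projTo s (vu I α : JetF n m k) = 0 := by
  refine Prod.ext rfl (funext fun J => funext fun β => ?_)
  have hJ : J.1 ≠ I := by
    intro h
    have := J.2
    rw [h] at this
    omega
  by_cases h : ∑ i, J.1 i ≤ k <;> simp [projTo, vu, h, hJ]

lemma sum_e (i : Fin m) : ∑ j, e i j = 1 := by
  simp [e]

/-- Key factorization of the derivative of a basic differentiable function. -/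
lemma fderiv_basic {k s : ℕ} {f : JetF n m k → ℝ} (hf : Differentiable ℝ f)
    (hb : BasicF s f) (hs : s ≤ k) (p : JetF n m k) :
    fderiv ℝ f p = (fderiv ℝ (fun q => f (sectL s k q)) (projTo s p)).comp (projL k s) := by
  obtain ⟨g, hg⟩ := hb
  have key : f = (fun q => f (sectL s k q)) ∘ (projL k s) := by
    funext q
    simp only [Function.comp_apply, projL_apply, sectL_apply]
    rw [hg, hg, projTo_sectF le_rfl hs]
    congr 1
    refine Prod.ext rfl (funext fun I => funext fun α => ?_)
    simp [projTo, I.2]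
  have hdh : Differentiable ℝ (fun q => f (sectL s k q)) :=
    hf.comp (sectL s k).differentiable
  conv_lhs => rw [key]
  rw [fderiv_comp p (hdh _) (projL k s).differentiableAt, (projL k s).fderiv, projL_apply]

lemma fderiv_basic_congr {k s : ℕ} {f : JetF n m k → ℝ} (hf : Differentiable ℝ f)
    (hb : BasicF s f) (hs : s ≤ k) {q₁ q₂ : JetF n m k}
    (h : projTo s q₁ = projTo s q₂) (v : JetF n m k) :
    fderiv ℝ f q₁ v = fderiv ℝ f q₂ v := by
  rw [fderiv_basic hf hb hs, fderiv_basic hf hb hs, h]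

lemma pdu_basic_zero {k s : ℕ} {f : JetF n m k → ℝ} (hf : Differentiable ℝ f)
    (hb : BasicF s f) (hs : s ≤ k) {I : Fin m → ℕ} (hI : s < ∑ j, I j) (α : Fin n)
    (q : JetF n m k) : pdu I α f q = 0 := by
  rw [pdu, fderiv_basic hf hb hs]
  rw [ContinuousLinearMap.comp_apply, projL_apply, projTo_vu hI, map_zero]

/-- The total derivative of an `s`-basic differentiable function is `(s+1)`-basic. -/
lemma Dtot_basic {k s : ℕ} (i : Fin m) {f : JetF n m k → ℝ}
    (hf : Differentiable ℝ f) (hb : BasicF s f) (hs : s ≤ k) :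
    BasicF (s + 1) (Dtot i f) := by
  refine ⟨fun q => Dtot i f (sectF (s+1) (k+1) q), fun p => ?_⟩
  set p' : JetF n m (k+1) := sectF (s+1) (k+1) (projTo (s+1) p) with hp'
  have hproj : projTo s (projTo k p) = projTo s (projTo k p') := by
    rw [projTo_projTo hs, projTo_projTo hs, hp',
      projTo_sectF (Nat.le_succ s) (by omega), projTo_projTo (Nat.le_succ s)]
  unfold Dtot
  congr 1
  · exact fderiv_basic_congr hf hb hs hproj _
  · refine Finset.sum_congr rfl fun I _ => Finset.sum_congr rfl fun β _ => ?_
    by_cases hI : ∑ j, I.1 j ≤ s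
    · have hsum : ∑ j, (I.1 j + e i j) = (∑ j, I.1 j) + 1 := by
        rw [Finset.sum_add_distrib, sum_e]
      have h1 : coordu (fun j => I.1 j + e i j) β p
          = coordu (fun j => I.1 j + e i j) β p' := by
        rw [hp', coordu_sectF (by omega) (by omega), coordu_projTo (by omega)]
      rw [h1]
      congr 1
      exact fderiv_basic_congr hf hb hs hproj _
    · rw [pdu_basic_zero hf hb hs (by omega) β, pdu_basic_zero hf hb hs (by omega) β,
        mul_zero, mul_zero]

lemma contDiff_pdu {k : ℕ} (I : Fin m → ℕ) (α : Fin n) {f : JetF n m k → ℝ}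
    (hf : ContDiff ℝ (⊤ : ℕ∞) f) : ContDiff ℝ (⊤ : ℕ∞) (pdu I α f) :=
  (hf.fderiv_right (by exact_mod_cast le_top)).clm_apply contDiff_const

lemma contDiff_pdx {k : ℕ} (i : Fin m) {f : JetF n m k → ℝ}
    (hf : ContDiff ℝ (⊤ : ℕ∞) f) : ContDiff ℝ (⊤ : ℕ∞) (pdx i f) :=
  (hf.fderiv_right (by exact_mod_cast le_top)).clm_apply contDiff_const

lemma contDiff_coordu {k : ℕ} (I : Fin m → ℕ) (α : Fin n) :
    ContDiff ℝ (⊤ : ℕ∞) (coordu I α : JetF n m k → ℝ) := by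
  unfold coordu
  split
  · exact (((contDiff_apply ℝ ℝ α).comp (contDiff_apply ℝ (Fin n → ℝ) _)).comp contDiff_snd)
  · exact contDiff_const

lemma contDiff_projTo {k s : ℕ} : ContDiff ℝ (⊤ : ℕ∞) (projTo s : JetF n m k → JetF n m s) :=
  (projL k s).contDiff

lemma contDiff_Dtot {k : ℕ} (i : Fin m) {f : JetF n m k → ℝ}
    (hf : ContDiff ℝ (⊤ : ℕ∞) f) : ContDiff ℝ (⊤ : ℕ∞) (Dtot i f) := by
  unfold Dtot
  refine ContDiff.add ((contDiff_pdx i hf).comp contDiff_projTo) ?_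
  refine ContDiff.sum fun I _ => ContDiff.sum fun α _ => ?_
  exact (contDiff_coordu _ α).mul ((contDiff_pdu I.1 α hf).comp contDiff_projTo)

lemma contDiff_PCij {L : JetF n m 2 → ℝ} (hL : ContDiff ℝ (⊤ : ℕ∞) L)
    (i j : Fin m) (α : Fin n) : ContDiff ℝ (⊤ : ℕ∞) (PCij L i j α) := by
  unfold PCij
  exact contDiff_const.mul (contDiff_pdu _ α hL)

lemma contDiff_PCi {L : JetF n m 2 → ℝ} (hL : ContDiff ℝ (⊤ : ℕ∞) L)
    (i : Fin m) (α : Fin n) : ContDiff ℝ (⊤ : ℕ∞) (PCi L i α) := by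
  unfold PCi
  refine ContDiff.sub ((contDiff_pdu _ α hL).comp contDiff_projTo) ?_
  exact ContDiff.sum fun j _ => contDiff_Dtot j (contDiff_PCij hL i j α)

end JetF

/-- Order of the Euler–Lagrange equations for second-order field
theories. If every `L^i_α` and every `L^{ij}_α` is `π^3_s`-basic (`s ∈ {1,2}`), then
every `L^0_α` is `π^4_(s+1)`-basic: the Euler–Lagrange equations are of order ≤ `s+1`. -/
theorem stmt13 {n m : ℕ} (hn : 1 ≤ n) (hm : 1 ≤ m)
    (L : JetF n m 2 → ℝ) (hL : ContDiff ℝ (⊤ : ℕ∞) L)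
    (s : ℕ) (hs : s = 1 ∨ s = 2)
    (h1 : ∀ (i : Fin m) (α : Fin n), JetF.BasicF s (JetF.PCi L i α))
    (h2 : ∀ (i j : Fin m) (α : Fin n),
      JetF.BasicF s (fun p : JetF n m 3 => JetF.PCij L i j α (JetF.projTo 2 p))) :
    ∀ α : Fin n, JetF.BasicF (s + 1) (JetF.PCzero L α) := by
  intro α
  have hs3 : s ≤ 3 := by rcases hs with h | h <;> omega
  have hs1 : 1 ≤ s := by rcases hs with h | h <;> omega
  have hdiff : ∀ i : Fin m, Differentiable ℝ (JetF.PCi L i α) := fun i =>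
    (JetF.contDiff_PCi hL i α).differentiable (by simp)
  choose g hg using fun i : Fin m => JetF.Dtot_basic i (hdiff i) (h1 i α) hs3
  refine ⟨fun q => JetF.pdu (fun _ => 0) α L (JetF.projTo 2 q) - ∑ i, g i q, fun p => ?_⟩
  unfold JetF.PCzero
  congr 1
  · rw [JetF.projTo_projTo (by omega)]
  · exact Finset.sum_congr rfl fun i _ => hg i p
end
end
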